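/- Minimum sampling set size bound: assume W = V_K^H H^H H V_K is positive definite, let ℓ_max = max_{1≤i≤n} ℓ_i with ℓ_i = λ_{w,i}^{-1} v_i^H W^{-1} v_i, assume ℓ_max > 0, and let η > 0. Then every subset S ⊆ {1,…,n} with MSE(S) ≤ η satisfies |S| ≥ ( k² − η·trace(Λ^{-1} W^{-1}) ) / ( η·ℓ_max ). -/

import Mathlib

open Matrix Finset ComplexOrder

/-- The matrix `M(S) = Λ⁻¹ + ∑_{i ∈ S} λ_{w,i}⁻¹ v_i v_iᴴ`. -/
noncomputable def Mmat {n k : ℕ} (lam : Fin k → ℝ) (lw : Fin n → ℝ)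
    (v : Fin n → Fin k → ℂ) (S : Finset (Fin n)) : Matrix (Fin k) (Fin k) ℂ :=
  (Matrix.diagonal fun j => (lam j : ℂ))⁻¹ +
    ∑ i ∈ S, ((lw i : ℂ))⁻¹ • Matrix.vecMulVec (v i) (star (v i))

/-- The matrix `V_K` whose `i`-th row is `v_iᴴ`. -/
noncomputable def VKmat {n k : ℕ} (v : Fin n → Fin k → ℂ) : Matrix (Fin n) (Fin k) ℂ :=
  Matrix.of fun i j => star (v i j)

/-- The optimal interpolation error covariance `K*(S) = H V_K M(S)⁻¹ V_Kᴴ Hᴴ`. -/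
noncomputable def Kstar {n k m : ℕ} (lam : Fin k → ℝ) (lw : Fin n → ℝ)
    (v : Fin n → Fin k → ℂ) (H : Matrix (Fin m) (Fin n) ℂ) (S : Finset (Fin n)) :
    Matrix (Fin m) (Fin m) ℂ :=
  H * VKmat v * (Mmat lam lw v S)⁻¹ * (VKmat v)ᴴ * Hᴴ

/-- The interpolation mean-square error `MSE(S) = trace K*(S)`, a (nonnegative) real. -/
noncomputable def MSE {n k m : ℕ} (lam : Fin k → ℝ) (lw : Fin n → ℝ)
    (v : Fin n → Fin k → ℂ) (H : Matrix (Fin m) (Fin n) ℂ) (S : Finset (Fin n)) : ℝ :=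
  ((Kstar lam lw v H S).trace).re


/-!
Writing `M = M(S)`, the weighted trace inner product `⟪X, Y⟫ = trace (Y M⁻¹ Xᴴ)` and a
factorisation `W = Xᴴ X` give, by Cauchy–Schwarz applied to `X` and `Y = X⁻ᴴ M`,
`k² ≤ trace (W M⁻¹) · trace (M W⁻¹)`. The first factor is `MSE(S) ≤ η`, and the second one
splits as `trace (Λ⁻¹ W⁻¹) + ∑_{i ∈ S} ℓ_i ≤ trace (Λ⁻¹ W⁻¹) + |S| ℓ_max`.
-/

namespace Matrix

theorem trace_vecMulVec_mul {R n : Type*} [CommSemiring R] [Fintype n]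
    (a b : n → R) (X : Matrix n n R) : (vecMulVec a b * X).trace = b ⬝ᵥ X *ᵥ a := by
  rw [vecMulVec_mul, trace_vecMulVec, dotProduct_comm, dotProduct_mulVec]

variable {𝕜 n : Type*} [RCLike 𝕜] [Fintype n]

open scoped MatrixOrder in
theorem PosSemidef.trace_mul_nonneg [DecidableEq n] {A B : Matrix n n 𝕜} (hA : A.PosSemidef)
    (hB : B.PosSemidef) : 0 ≤ (A * B).trace := by
  obtain ⟨X, rfl⟩ := CStarAlgebra.nonneg_iff_eq_star_mul_self.mp hB.nonneg
  rw [← Matrix.mul_assoc, trace_mul_comm, ← Matrix.mul_assoc]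
  exact (hA.mul_mul_conjTranspose_same X).trace_nonneg

theorem PosSemidef.norm_trace_mul_norm_trace_le {M : Matrix n n 𝕜} (hM : M.PosSemidef)
    (X Y : Matrix n n 𝕜) :
    ‖(Y * M * Xᴴ).trace‖ * ‖(X * M * Yᴴ).trace‖
      ≤ RCLike.re (X * M * Xᴴ).trace * RCLike.re (Y * M * Yᴴ).trace := by
  let := M.toMatrixSeminormedAddCommGroup hM
  let := M.toMatrixInnerProductSpace hM
  exact inner_mul_inner_self_le (𝕜 := 𝕜) X Y

open scoped MatrixOrder in
theorem PosDef.sq_card_le_re_trace_mul_inv_mul [DecidableEq n] {W M : Matrix n n 𝕜}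
    (hW : W.PosDef) (hM : M.PosDef) :
    (Fintype.card n : ℝ) ^ 2 ≤ RCLike.re (W * M⁻¹).trace * RCLike.re (M * W⁻¹).trace := by
  obtain ⟨X, hX, rfl⟩ :=
    CStarAlgebra.isStrictlyPositive_iff_eq_star_mul_self.mp hW.isStrictlyPositive
  have hCS := hM.inv.posSemidef.norm_trace_mul_norm_trace_le X (X⁻¹ᴴ * M)
  have hMM : M * M⁻¹ = 1 := M.mul_nonsing_inv (M.isUnit_iff_isUnit_det.mp hM.isUnit)
  have hXX : X * X⁻¹ = 1 := X.mul_nonsing_inv (X.isUnit_iff_isUnit_det.mp hX)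
  have hMh : Mᴴ = M := hM.isHermitian
  have inner_XY : X⁻¹ᴴ * M * M⁻¹ * Xᴴ = 1 := by
    rw [Matrix.mul_assoc _ M, hMM, Matrix.mul_one, ← conjTranspose_mul, hXX, conjTranspose_one]
  have inner_YX : X * M⁻¹ * (X⁻¹ᴴ * M)ᴴ = 1 := by
    rw [conjTranspose_mul, conjTranspose_conjTranspose, hMh, Matrix.mul_assoc,
      ← Matrix.mul_assoc M⁻¹, M.nonsing_inv_mul (M.isUnit_iff_isUnit_det.mp hM.isUnit),
      Matrix.one_mul, hXX]
  have inner_XX : (X * M⁻¹ * Xᴴ).trace = (star X * X * M⁻¹).trace := by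
    rw [trace_mul_comm, ← Matrix.mul_assoc, star_eq_conjTranspose]
  have inner_YY : (X⁻¹ᴴ * M * M⁻¹ * (X⁻¹ᴴ * M)ᴴ).trace = (M * (star X * X)⁻¹).trace := by
    rw [Matrix.mul_assoc _ M, hMM, Matrix.mul_one, conjTranspose_mul, hMh,
      conjTranspose_conjTranspose, trace_mul_comm, Matrix.mul_assoc, star_eq_conjTranspose,
      Matrix.mul_inv_rev, conjTranspose_nonsing_inv]
  rw [inner_XY, inner_YX, inner_XX, inner_YY, trace_one] at hCS
  simpa [sq] using hCS

end Matrix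

variable {n k m : ℕ}

theorem Mmat_posDef (lam : Fin k → ℝ) (hlam : ∀ j, 0 < lam j) (lw : Fin n → ℝ)
    (hlw : ∀ i, 0 ≤ lw i) (v : Fin n → Fin k → ℂ) (S : Finset (Fin n)) :
    (Mmat lam lw v S).PosDef := by
  refine PosDef.add_posSemidef ?_ (posSemidef_sum S fun i _ => ?_)
  · exact posDef_inv_iff.mpr (posDef_diagonal_iff.mpr fun j => Complex.zero_lt_real.mpr (hlam j))
  · refine (posSemidef_vecMulVec_self_star (v i)).smul ?_
    rw [← Complex.ofReal_inv]
    exact Complex.zero_le_real.mpr (inv_nonneg.mpr (hlw i))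

theorem MSE_eq_re_trace_mul_inv (lam : Fin k → ℝ) (lw : Fin n → ℝ) (v : Fin n → Fin k → ℂ)
    (H : Matrix (Fin m) (Fin n) ℂ) (S : Finset (Fin n)) :
    MSE lam lw v H S = ((VKmat v)ᴴ * Hᴴ * H * VKmat v * (Mmat lam lw v S)⁻¹).trace.re := by
  rw [MSE, Kstar, Matrix.mul_assoc _ (VKmat v)ᴴ, trace_mul_comm]
  simp only [Matrix.mul_assoc]

theorem re_trace_Mmat_mul (lam : Fin k → ℝ) (lw : Fin n → ℝ) (v : Fin n → Fin k → ℂ)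
    (S : Finset (Fin n)) (X : Matrix (Fin k) (Fin k) ℂ) :
    (Mmat lam lw v S * X).trace.re = ((diagonal fun j => (lam j : ℂ))⁻¹ * X).trace.re
      + ∑ i ∈ S, (lw i)⁻¹ * (star (v i) ⬝ᵥ X *ᵥ v i).re := by
  simp only [Mmat, Matrix.add_mul, Finset.sum_mul, trace_add, trace_sum, smul_mul_assoc,
    trace_smul, trace_vecMulVec_mul, smul_eq_mul, ← Complex.ofReal_inv, Complex.add_re,
    Complex.re_sum, Complex.re_ofReal_mul]

/-- Minimum sampling set size bound: if `W = V_Kᴴ Hᴴ H V_K` is positive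
definite, `ℓ_max = max_i ℓ_i > 0` with `ℓ_i = λ_{w,i}⁻¹ v_iᴴ W⁻¹ v_i`, and `η > 0`, then
every `S` with `MSE(S) ≤ η` satisfies `|S| ≥ (k² - η · trace(Λ⁻¹ W⁻¹)) / (η · ℓ_max)`. -/
theorem minimum_sampling_set_size_bound
    (n k m : ℕ)
    (v : Fin n → Fin k → ℂ)
    (H : Matrix (Fin m) (Fin n) ℂ)
    (lam : Fin k → ℝ) (hlam : ∀ j, 0 < lam j)
    (lw : Fin n → ℝ) (hlw : ∀ i, 0 < lw i)
    (W : Matrix (Fin k) (Fin k) ℂ)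
    (hWdef : W = (VKmat v)ᴴ * Hᴴ * H * VKmat v)
    (hW : W.PosDef)
    (ell : Fin n → ℝ)
    (hell : ∀ i, ell i = (lw i)⁻¹ * (star (v i) ⬝ᵥ (W⁻¹ *ᵥ v i)).re)
    (lmax : ℝ) (hlmax : IsGreatest (Set.range ell) lmax) (hlmaxpos : 0 < lmax)
    (η : ℝ) (hη : 0 < η)
    (S : Finset (Fin n))
    (hMSE : MSE lam lw v H S ≤ η) :
    ((k : ℝ) ^ 2 -
        η * (((Matrix.diagonal fun j => (lam j : ℂ))⁻¹ * W⁻¹).trace).re) / (η * lmax)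
      ≤ (S.card : ℝ) := by
  have hM := Mmat_posDef lam hlam lw (fun i => (hlw i).le) v S
  have hcard : (k : ℝ) ^ 2 ≤ MSE lam lw v H S * (Mmat lam lw v S * W⁻¹).trace.re := by
    simpa [MSE_eq_re_trace_mul_inv, ← hWdef] using hW.sq_card_le_re_trace_mul_inv_mul hM
  have hsplit : (Mmat lam lw v S * W⁻¹).trace.re
      = ((diagonal fun j => (lam j : ℂ))⁻¹ * W⁻¹).trace.re + ∑ i ∈ S, ell i := by
    simp only [re_trace_Mmat_mul, hell]
  have hsum : ∑ i ∈ S, ell i ≤ S.card * lmax := by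
    simpa using Finset.sum_le_card_nsmul S ell lmax fun i _ => hlmax.2 ⟨i, rfl⟩
  have hnonneg : 0 ≤ (Mmat lam lw v S * W⁻¹).trace.re :=
    (Complex.nonneg_iff.mp (hM.posSemidef.trace_mul_nonneg hW.inv.posSemidef)).1
  rw [div_le_iff₀ (mul_pos hη hlmaxpos)]
  nlinarith [mul_le_mul_of_nonneg_right hMSE hnonneg, mul_le_mul_of_nonneg_left hsum hη.le]
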